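/- Let C be a set, H := ℓ²(C), H_k := ℓ²(C^k), and let O(H) act on each H_k via the natural continuous extension of the diagonal tensor-power action g ↦ g^{⊗k}. Then the partition function is O(H)-invariant: for every g ∈ O(H), every h = (h_k)_k ∈ ∏_{k∈ℕ} B_k, and every finite simple graph F, π(g·h)(F) = π(h)(F), where g·h := (g·h_k)_k. -/

import Mathlib

open scoped InnerProductSpace
open Filter

noncomputable section

/-- `ℓ²(C)`, the real Hilbert space of square-summable functions `C → ℝ`. -/
abbrev l2 (C : Type) : Type := lp (fun _ : C => ℝ) 2

/-- `H_k = ℓ²(C^k)`. -/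
abbrev Hk (C : Type) (k : ℕ) : Type := lp (fun _ : (Fin k → C) => ℝ) 2

/-- `S_k`-invariance of an element of `H_k = ℓ²(C^k)` (for the action of `S_k` permuting
the coordinates of `C^k`). -/
def SkInv {C : Type} {k : ℕ} (h : Hk C k) : Prop :=
  ∀ (σ : Equiv.Perm (Fin k)) (c : Fin k → C), h (c ∘ σ) = h c

/-- `B_k`, the closed unit ball of the subspace `H_k^{S_k}` of `S_k`-invariant elements. -/
def Bk (C : Type) (k : ℕ) : Set (Hk C k) := {x | SkInv x ∧ ‖x‖ ≤ 1}

/-- `R_k`, the set of elementary tensors `r₁ ⊗ ⋯ ⊗ r_k` with each `rᵢ` in the closed unit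
ball of `ℓ²(C)`. -/
def Rk (C : Type) (k : ℕ) : Set (Hk C k) :=
  {x | ∃ r : Fin k → l2 C, (∀ i, ‖r i‖ ≤ 1) ∧ ∀ c : Fin k → C, x c = ∏ i, r i (c i)}

/-- The seminorm `‖x‖_R = sup_{r ∈ R} |⟨r,x⟩|`. -/
def normR {H : Type*} [NormedAddCommGroup H] [InnerProductSpace ℝ H] (R : Set H) (x : H) : ℝ :=
  ⨆ r : R, |⟪(r : H), x⟫_ℝ|

/-- The pseudometric `d_R(x,y) = ‖x - y‖_R`. -/
def dR {H : Type*} [NormedAddCommGroup H] [InnerProductSpace ℝ H] (R : Set H) (x y : H) : ℝ :=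
  normR R (x - y)

/-- The topology induced by a pseudometric `d` : the one generated by the open balls of `d`. -/
def ballTopology {X : Type*} (d : X → X → ℝ) : TopologicalSpace X :=
  TopologicalSpace.generateFrom {s | ∃ x ε, 0 < ε ∧ s = {y | d x y < ε}}

/-- `δ` enumerates, for each vertex `v`, the edges of `F` incident with `v` (in some order). -/
def IsEnum {V : Type} [Fintype V] [DecidableEq V] (F : SimpleGraph V) [DecidableRel F.Adj]
    (δ : ∀ v : V, Fin (F.degree v) → F.edgeSet) : Prop :=
  ∀ v : V, Function.Injective (δ v) ∧
    ∀ e : F.edgeSet, v ∈ (e : Sym2 V) ↔ e ∈ Set.range (δ v)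

/-- The partition function `π_F(h) = Σ_{φ : E(F) → C} ∏_{v ∈ V(F)} h_v(φ(δ(v)))`. -/
def piF {C V : Type} [Fintype V] [DecidableEq V] (F : SimpleGraph V) [DecidableRel F.Adj]
    (δ : ∀ v : V, Fin (F.degree v) → F.edgeSet)
    (h : ∀ v : V, Hk C (F.degree v)) : ℝ :=
  ∑' φ : F.edgeSet → C, ∏ v : V, h v (fun i => φ (δ v i))

/-- `act` is the natural action of `O(H) = O(ℓ²(C))` on the spaces `H_k = ℓ²(C^k)`:
the (unique) continuous linear extension of the diagonal tensor-power action
`g^{⊗k}`, i.e. it sends each elementary tensor `r₁ ⊗ ⋯ ⊗ r_k` to `(g r₁) ⊗ ⋯ ⊗ (g r_k)`. -/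
def IsTensorPowerAction {C : Type}
    (act : (l2 C ≃ₗᵢ[ℝ] l2 C) → ∀ k : ℕ, Hk C k ≃ₗᵢ[ℝ] Hk C k) : Prop :=
  ∀ (g : l2 C ≃ₗᵢ[ℝ] l2 C) (k : ℕ) (r : Fin k → l2 C) (x : Hk C k),
    (∀ c : Fin k → C, x c = ∏ i, r i (c i)) →
    ∀ c : Fin k → C, (act g k x) c = ∏ i, (g (r i)) (c i)

/-!
The partition function is the contraction `P(x) = ∑_ψ ∏_v x_v(ψ ∘ δ_v)` of tensors
`x_v ∈ ℓ²(C^{deg v})` along the edges of `F`; every edge carries exactly two half-edges, at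
distinct vertices. Summing out the colour of one edge at a time with Cauchy–Schwarz
(Finner's inequality) gives `∑_ψ ∏_v |x_v(ψ ∘ δ_v)| ≤ ∏_v ‖x_v‖`, so `P` is a bounded
multilinear form. On elementary tensors `x_v = ⊗_i r_{v,i}`, `P(x)` is the product over the
edges of the inner products of the two vectors at its ends, which an orthogonal `g` preserves.
The standard basis vectors of `ℓ²(C^k)` are elementary tensors spanning a dense subspace, so
`P(g·x) = P(x)` for all `x` by multilinearity and continuity.
-/

open scoped ENNReal lp
open MeasureTheory

section L2ENorm

variable {α β : Type*}

def l2ENorm (y : α → ℝ≥0∞) : ℝ≥0∞ := (∑' a, y a ^ 2) ^ (2⁻¹ : ℝ)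

lemma l2ENorm_sq (y : α → ℝ≥0∞) : l2ENorm y ^ 2 = ∑' a, y a ^ 2 := by
  rw [l2ENorm, ← ENNReal.rpow_natCast, ← ENNReal.rpow_mul]
  norm_num

lemma l2ENorm_comp_equiv (e : β ≃ α) (y : α → ℝ≥0∞) : l2ENorm (y ∘ e) = l2ENorm y := by
  simp only [l2ENorm, Function.comp_apply, e.tsum_eq fun a => y a ^ 2]

lemma l2ENorm_of_subsingleton [Subsingleton α] (y : α → ℝ≥0∞) (a : α) : l2ENorm y = y a := by
  rw [l2ENorm, tsum_eq_single a fun b hb => (hb (Subsingleton.elim b a)).elim]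
  simpa using ENNReal.pow_rpow_inv_natCast two_ne_zero (y a)

lemma tsum_mul_le_l2ENorm_mul (f g : α → ℝ≥0∞) : ∑' a, f a * g a ≤ l2ENorm f * l2ENorm g := by
  let _ : MeasurableSpace α := ⊤
  have hCS := ENNReal.lintegral_mul_le_Lp_mul_Lq (Measure.count (α := α))
    Real.HolderConjugate.two_two measurable_from_top.aemeasurable measurable_from_top.aemeasurable
    (f := f) (g := g)
  simpa only [lintegral_count, Pi.mul_apply, ENNReal.rpow_ofNat, one_div, l2ENorm] using hCS

variable (p : α → Prop) [DecidablePred p]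

def partialL2ENorm (y : (α → β) → ℝ≥0∞) (c : {a // ¬ p a} → β) : ℝ≥0∞ :=
  l2ENorm fun b : {a // p a} → β => y ((Equiv.piEquivPiSubtypeProd p fun _ => β).symm (b, c))

lemma l2ENorm_partialL2ENorm (y : (α → β) → ℝ≥0∞) :
    l2ENorm (partialL2ENorm p y) = l2ENorm y := by
  have hsq : ∑' c, partialL2ENorm p y c ^ 2 = ∑' b, y b ^ 2 := by
    simp only [partialL2ENorm, l2ENorm_sq]
    rw [ENNReal.tsum_comm, ← ENNReal.tsum_prod]
    exact (Equiv.piEquivPiSubtypeProd p fun _ => β).symm.tsum_eq fun b => y b ^ 2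
  rw [l2ENorm, hsq, l2ENorm]

end L2ENorm

theorem summable_norm_prod_and_tsum_prod_eq {R C E : Type*} [NormedCommRing R] [CompleteSpace R]
    [Fintype E] (f : E → C → R) (hf : ∀ e, Summable fun c => ‖f e c‖) :
    (Summable fun ψ : E → C => ‖∏ e, f e (ψ e)‖) ∧
      ∑' ψ : E → C, ∏ e, f e (ψ e) = ∏ e, ∑' c, f e c := by
  classical
  induction hn : Fintype.card E generalizing E with
  | zero =>
    have : IsEmpty E := Fintype.card_eq_zero_iff.mp hn
    refine ⟨.of_finite, ?_⟩
    rw [tsum_eq_single (isEmptyElim : E → C) fun ψ hψ => (hψ (Subsingleton.elim _ _)).elim]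
    simp
  | succ n ih =>
    obtain ⟨e₀⟩ : Nonempty E := Fintype.card_pos_iff.mp (by omega)
    have hcard : Fintype.card {e // e ≠ e₀} = n := by
      rw [Fintype.card_subtype_compl, Fintype.card_subtype_eq]; omega
    obtain ⟨hsum, htsum⟩ := ih (fun e : {e // e ≠ e₀} => f e) (fun e => hf e) hcard
    have hsplit (ψ : E → C) : ∏ e, f e (ψ e) =
        f e₀ (Equiv.funSplitAt e₀ C ψ).1 *
          ∏ e : {e // e ≠ e₀}, f e ((Equiv.funSplitAt e₀ C ψ).2 e) :=
      Fintype.prod_eq_mul_prod_subtype_ne _ e₀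
    refine ⟨?_, ?_⟩
    · simpa only [Function.comp_def, ← hsplit] using
        (Equiv.funSplitAt e₀ C).summable_iff.mpr ((hf e₀).mul_norm hsum)
    · rw [Fintype.prod_eq_mul_prod_subtype_ne _ e₀, ← htsum,
        tsum_mul_tsum_of_summable_norm (hf e₀) hsum, ← (Equiv.funSplitAt e₀ C).tsum_eq]
      exact tsum_congr hsplit

theorem ContinuousMultilinearMap.ext_on {R ι N : Type*} {M : ι → Type*} [Semiring R] [Finite ι]
    [∀ i, AddCommMonoid (M i)] [∀ i, Module R (M i)] [∀ i, TopologicalSpace (M i)]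
    [AddCommMonoid N] [Module R N] [TopologicalSpace N] [T2Space N] {s : ∀ i, Set (M i)}
    (hs : ∀ i, Dense (Submodule.span R (s i) : Set (M i)))
    {f g : ContinuousMultilinearMap R M N} (h : ∀ x, (∀ i, x i ∈ s i) → f x = g x) : f = g := by
  classical
  have := Fintype.ofFinite ι
  suffices ∀ (S : Finset ι) x, (∀ i ∉ S, x i ∈ s i) → f x = g x from
    ext fun x => this Finset.univ x (by simp)
  intro S
  induction S using Finset.induction_on with
  | empty => simpa using h
  | insert a S _ ih =>
    intro x hx
    have hslice : f.toContinuousLinearMap x a = g.toContinuousLinearMap x a := by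
      refine ContinuousLinearMap.ext_on (hs a) fun y hy => ih _ fun i hi => ?_
      rcases eq_or_ne i a with rfl | hia
      · simpa using hy
      · simpa [hia] using hx i (by simp [hia, hi])
    simpa using congr($hslice (x a))

lemma dense_span_range_lp_single (α : Type*) [DecidableEq α] :
    Dense (Submodule.span ℝ (Set.range fun a => (lp.single 2 a 1 : ℓ²(α, ℝ))) : Set ℓ²(α, ℝ)) := by
  have hbasis : (fun a => (lp.single 2 a 1 : ℓ²(α, ℝ))) = ⇑(default : HilbertBasis α ℝ ℓ²(α, ℝ)) :=
    funext fun a => by rw [← HilbertBasis.repr_symm_single]; rfl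
  rw [hbasis, Submodule.dense_iff_topologicalClosure_eq_top]
  exact HilbertBasis.dense_span _

lemma lp_single_pi_apply {ι C : Type*} [Fintype ι] [DecidableEq C] [DecidableEq (ι → C)]
    (a d : ι → C) :
    (lp.single 2 a 1 : ℓ²(ι → C, ℝ)) d = ∏ i, (lp.single 2 (a i) 1 : ℓ²(C, ℝ)) (d i) := by
  simp [lp.single_apply, Pi.single_apply, Finset.prod_boole, funext_iff]

lemma l2ENorm_enorm {α : Type*} (x : ℓ²(α, ℝ)) : l2ENorm (fun a => ‖x a‖ₑ) = ‖x‖ₑ := by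
  have hsum : Summable fun a => ‖x a‖ ^ 2 := by
    simpa using (lp.memℓp x).summable (p := 2) (by norm_num)
  have hsq : ∑' a, ‖x a‖ ^ 2 = ‖x‖ ^ 2 := by
    simpa using (lp.norm_rpow_eq_tsum (p := 2) (by norm_num) x).symm
  rw [← ENNReal.pow_rpow_inv_natCast two_ne_zero ‖x‖ₑ, l2ENorm]
  congr 1
  simp_rw [← ofReal_norm, ← ENNReal.ofReal_pow (norm_nonneg _),
    ← ENNReal.ofReal_tsum_of_nonneg (fun a => by positivity) hsum, hsq]

section TwoEnded

variable {C V E : Type*} {I : V → Type*}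

def IsTwoEnded (δ : ∀ v, I v → E) : Prop :=
  ∀ e, ∃ d₁ d₂ : Σ v, I v, d₁.1 ≠ d₂.1 ∧ ∀ d : Σ v, I v, δ d.1 d.2 = e ↔ d = d₁ ∨ d = d₂

variable {δ : ∀ v, I v → E}

lemma IsTwoEnded.subsingleton_fiber (hδ : IsTwoEnded δ) (e : E) (v : V) :
    Subsingleton {i : I v // δ v i = e} := by
  obtain ⟨d₁, d₂, hne, hiff⟩ := hδ e
  refine ⟨fun ⟨i, hi⟩ ⟨j, hj⟩ => ?_⟩
  rcases (hiff ⟨v, i⟩).1 hi with rfl | rfl <;> rcases (hiff ⟨v, j⟩).1 hj with h | h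
  all_goals first
    | exact absurd (congrArg Sigma.fst h) (by simpa using hne)
    | exact absurd (congrArg Sigma.fst h) (by simpa using hne.symm)
    | cases h; rfl

lemma IsTwoEnded.exists_nonempty_fiber_iff (hδ : IsTwoEnded δ) (e : E) :
    ∃ u w : V, u ≠ w ∧ ∀ v, Nonempty {i : I v // δ v i = e} ↔ v = u ∨ v = w := by
  obtain ⟨⟨u, i⟩, ⟨w, j⟩, hne, hiff⟩ := hδ e
  refine ⟨u, w, hne, fun v => ⟨fun ⟨k, hk⟩ => ?_, ?_⟩⟩
  · rcases (hiff ⟨v, k⟩).1 hk with h | h <;> cases h <;> simp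
  · rintro (rfl | rfl)
    exacts [⟨i, (hiff ⟨v, i⟩).2 (Or.inl rfl)⟩, ⟨j, (hiff ⟨v, j⟩).2 (Or.inr rfl)⟩]

def restrictEdges (δ : ∀ v, I v → E) (e₀ : E) (v : V) (i : {i : I v // ¬ δ v i = e₀}) :
    {e // e ≠ e₀} :=
  ⟨δ v i, i.2⟩

lemma IsTwoEnded.restrict (hδ : IsTwoEnded δ) (e₀ : E) :
    IsTwoEnded (restrictEdges δ e₀) := by
  rintro ⟨e, he⟩
  obtain ⟨⟨u, i⟩, ⟨w, j⟩, hne, hiff⟩ := hδ e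
  have hi : δ u i = e := (hiff ⟨u, i⟩).2 (Or.inl rfl)
  have hj : δ w j = e := (hiff ⟨w, j⟩).2 (Or.inr rfl)
  refine ⟨⟨u, i, hi ▸ he⟩, ⟨w, j, hj ▸ he⟩, hne, fun ⟨v, k, hk⟩ => ?_⟩
  rw [restrictEdges, Subtype.mk.injEq, hiff ⟨v, k⟩]
  constructor <;> rintro (h | h) <;> cases h <;> simp

lemma funSplitAt_symm_comp [DecidableEq E] (δ : ∀ v, I v → E) (e₀ : E) (v : V) (c : C)
    (ψ : {e // e ≠ e₀} → C) :
    (fun i => (Equiv.funSplitAt e₀ C).symm (c, ψ) (δ v i)) =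
      (Equiv.piEquivPiSubtypeProd (fun i => δ v i = e₀) fun _ => C).symm
        (fun _ => c, fun i => ψ (restrictEdges δ e₀ v i)) := by
  funext i
  by_cases h : δ v i = e₀ <;> simp [h, restrictEdges]

end TwoEnded

section Finner

variable {C V E : Type*} [Fintype V] {I : V → Type*}

lemma tsum_prod_const_le_prod_l2ENorm {J : V → Type*} [∀ v, Subsingleton (J v)] {u w : V}
    (huw : u ≠ w) (hJ : ∀ v, Nonempty (J v) ↔ v = u ∨ v = w) (y : ∀ v, (J v → C) → ℝ≥0∞) :
    ∑' c : C, ∏ v, y v (fun _ => c) ≤ ∏ v, l2ENorm (y v) := by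
  classical
  have hends : ∀ v ∈ ({u, w} : Finset V), l2ENorm (y v) = l2ENorm fun c : C => y v fun _ => c := by
    intro v hv
    obtain ⟨j⟩ : Nonempty (J v) := (hJ v).2 (by simpa using hv)
    have : Unique (J v) := uniqueOfSubsingleton j
    rw [← l2ENorm_comp_equiv (Equiv.funUnique (J v) C).symm]
    rfl
  have hrest : ∀ v ∉ ({u, w} : Finset V), ∀ c : C, y v (fun _ => c) = l2ENorm (y v) := by
    intro v hv c
    have : IsEmpty (J v) := not_nonempty_iff.mp fun h => hv (by simpa using (hJ v).1 h)
    exact (l2ENorm_of_subsingleton _ _).symm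
  calc ∑' c : C, ∏ v, y v (fun _ => c)
      = ∑' c : C, (y u (fun _ => c) * y w (fun _ => c)) * ∏ v ∈ {u, w}ᶜ, l2ENorm (y v) := by
        refine tsum_congr fun c => ?_
        rw [← Finset.prod_mul_prod_compl {u, w}, Finset.prod_pair huw]
        exact congrArg _ (Finset.prod_congr rfl fun v hv => hrest v (Finset.mem_compl.1 hv) c)
    _ = (∑' c : C, y u (fun _ => c) * y w (fun _ => c)) * ∏ v ∈ {u, w}ᶜ, l2ENorm (y v) :=
        ENNReal.tsum_mul_right
    _ ≤ (l2ENorm (y u) * l2ENorm (y w)) * ∏ v ∈ {u, w}ᶜ, l2ENorm (y v) := by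
        rw [hends u (by simp), hends w (by simp)]
        gcongr
        exact tsum_mul_le_l2ENorm_mul _ _
    _ = ∏ v, l2ENorm (y v) := by
        rw [← Finset.prod_mul_prod_compl {u, w}, Finset.prod_pair huw]

theorem tsum_prod_le_prod_l2ENorm [Fintype E] {δ : ∀ v, I v → E} (hδ : IsTwoEnded δ)
    (x : ∀ v, (I v → C) → ℝ≥0∞) :
    ∑' ψ : E → C, ∏ v, x v (fun i => ψ (δ v i)) ≤ ∏ v, l2ENorm (x v) := by
  classical
  induction hn : Fintype.card E generalizing E I with
  | zero =>
    have : IsEmpty E := Fintype.card_eq_zero_iff.mp hn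
    have (v : V) : IsEmpty (I v) := ⟨fun i => isEmptyElim (δ v i)⟩
    rw [tsum_eq_single (isEmptyElim : E → C) fun ψ hψ => (hψ (Subsingleton.elim _ _)).elim]
    exact Finset.prod_le_prod' fun v _ => (l2ENorm_of_subsingleton _ _).ge
  | succ n ih =>
    obtain ⟨e₀⟩ : Nonempty E := Fintype.card_pos_iff.mp (by omega)
    obtain ⟨u, w, huw, hJ⟩ := hδ.exists_nonempty_fiber_iff e₀
    have := hδ.subsingleton_fiber e₀
    set x' : ∀ v, ({i // ¬ δ v i = e₀} → C) → ℝ≥0∞ :=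
      fun v => partialL2ENorm (fun i => δ v i = e₀) (x v)
    have hcard : Fintype.card {e // e ≠ e₀} = n := by
      rw [Fintype.card_subtype_compl, Fintype.card_subtype_eq]; omega
    calc ∑' ψ : E → C, ∏ v, x v (fun i => ψ (δ v i))
        = ∑' ψ' : {e // e ≠ e₀} → C, ∑' c : C,
            ∏ v, x v (fun i => (Equiv.funSplitAt e₀ C).symm (c, ψ') (δ v i)) := by
          rw [← (Equiv.funSplitAt e₀ C).symm.tsum_eq, ENNReal.tsum_prod', ENNReal.tsum_comm]
      _ ≤ ∑' ψ' : {e // e ≠ e₀} → C, ∏ v, x' v (fun i => ψ' (restrictEdges δ e₀ v i)) := by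
          -- Only the two ends of `e₀` see its colour `c`; Cauchy–Schwarz in `c` replaces each of
          -- them by its partial ℓ²-norm in the half-edge at `e₀`, which keeps its total ℓ²-norm.
          refine ENNReal.tsum_le_tsum fun ψ' => ?_
          simp only [funSplitAt_symm_comp]
          exact tsum_prod_const_le_prod_l2ENorm huw hJ _
      _ ≤ ∏ v, l2ENorm (x' v) := ih (hδ.restrict e₀) x' hcard
      _ = ∏ v, l2ENorm (x v) := by simp only [x', l2ENorm_partialL2ENorm]

end Finner

section Contraction

variable {C V E : Type*} [Fintype V] {I : V → Type*} {δ : ∀ v, I v → E}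

variable (δ) in
def coloringWeight (ψ : E → C) : MultilinearMap ℝ (fun v => ℓ²(I v → C, ℝ)) ℝ :=
  (MultilinearMap.mkPiAlgebra ℝ V ℝ).compLinearMap fun v => lp.evalₗ _ 2 fun i => ψ (δ v i)

lemma coloringWeight_apply (ψ : E → C) (x : ∀ v, ℓ²(I v → C, ℝ)) :
    coloringWeight δ ψ x = ∏ v, x v (fun i => ψ (δ v i)) := rfl

variable [Fintype E]

lemma IsTwoEnded.tsum_enorm_prod_le (hδ : IsTwoEnded δ) (x : ∀ v, ℓ²(I v → C, ℝ)) :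
    ∑' ψ : E → C, ‖∏ v, x v (fun i => ψ (δ v i))‖ₑ ≤ ∏ v, ‖x v‖ₑ := by
  calc _ = ∑' ψ : E → C, ∏ v, ‖x v (fun i => ψ (δ v i))‖ₑ := by simp [enorm, nnnorm_prod]
    _ ≤ ∏ v, l2ENorm fun c => ‖x v c‖ₑ := tsum_prod_le_prod_l2ENorm hδ _
    _ = ∏ v, ‖x v‖ₑ := by simp only [l2ENorm_enorm]

lemma IsTwoEnded.summable_prod (hδ : IsTwoEnded δ) (x : ∀ v, ℓ²(I v → C, ℝ)) :
    Summable fun ψ : E → C => ∏ v, x v (fun i => ψ (δ v i)) :=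
  .of_enorm ((hδ.tsum_enorm_prod_le x).trans_lt (by simp [ENNReal.prod_lt_top])).ne

lemma IsTwoEnded.norm_tsum_prod_le (hδ : IsTwoEnded δ) (x : ∀ v, ℓ²(I v → C, ℝ)) :
    ‖∑' ψ : E → C, ∏ v, x v (fun i => ψ (δ v i))‖ ≤ ∏ v, ‖x v‖ := by
  have hbound : ‖∑' ψ : E → C, ∏ v, x v (fun i => ψ (δ v i))‖ₑ ≤ ‖∏ v, ‖x v‖‖ₑ :=
    calc _ ≤ ∑' ψ : E → C, ‖∏ v, x v (fun i => ψ (δ v i))‖ₑ := enorm_tsum_le_tsum_enorm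
      _ ≤ ∏ v, ‖x v‖ₑ := hδ.tsum_enorm_prod_le x
      _ = ‖∏ v, ‖x v‖‖ₑ := by simp [enorm, nnnorm_prod]
  simpa [Finset.prod_nonneg] using enorm_le_iff_norm_le.1 hbound

def IsTwoEnded.contraction (hδ : IsTwoEnded δ) :
    ContinuousMultilinearMap ℝ (fun v => ℓ²(I v → C, ℝ)) ℝ :=
  MultilinearMap.mkContinuous
    { toFun := fun x => ∑' ψ : E → C, coloringWeight δ ψ x
      map_update_add' := fun x v a b => by
        simp only [MultilinearMap.map_update_add]
        exact (hδ.summable_prod _).tsum_add (hδ.summable_prod _)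
      map_update_smul' := fun x v c a => by
        simp only [MultilinearMap.map_update_smul, smul_eq_mul, tsum_mul_left] }
    1 fun x => by simpa [coloringWeight_apply] using hδ.norm_tsum_prod_le x

lemma IsTwoEnded.contraction_apply (hδ : IsTwoEnded δ) (x : ∀ v, ℓ²(I v → C, ℝ)) :
    hδ.contraction x = ∑' ψ : E → C, ∏ v, x v (fun i => ψ (δ v i)) := rfl

end Contraction

section Tensor

variable {C V E : Type*} [Fintype V] [Fintype E] {I : V → Type*} [∀ v, Fintype (I v)]
  {δ : ∀ v, I v → E}

lemma IsTwoEnded.exists_tsum_prod_tensor (hδ : IsTwoEnded δ) :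
    ∃ d₁ d₂ : E → Σ v, I v, ∀ r : ∀ v, I v → ℓ²(C, ℝ),
      ∑' ψ : E → C, ∏ v, ∏ i, r v i (ψ (δ v i)) =
        ∏ e, ⟪r (d₁ e).1 (d₁ e).2, r (d₂ e).1 (d₂ e).2⟫_ℝ := by
  classical
  choose d₁ d₂ hne hiff using hδ
  refine ⟨d₁, d₂, fun r => ?_⟩
  have hregroup (ψ : E → C) : ∏ v, ∏ i, r v i (ψ (δ v i)) =
      ∏ e, r (d₁ e).1 (d₁ e).2 (ψ e) * r (d₂ e).1 (d₂ e).2 (ψ e) := by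
    rw [← Fintype.prod_sigma' fun v i => r v i (ψ (δ v i)),
      ← Finset.prod_fiberwise (Finset.univ : Finset (Σ v, I v)) fun d => δ d.1 d.2]
    refine Finset.prod_congr rfl fun e _ => ?_
    have hfiber : {d ∈ (Finset.univ : Finset (Σ v, I v)) | δ d.1 d.2 = e} = {d₁ e, d₂ e} := by
      ext d
      simp [hiff]
    rw [hfiber, Finset.prod_pair fun h => hne e (congrArg Sigma.fst h),
      (hiff e (d₁ e)).2 (Or.inl rfl), (hiff e (d₂ e)).2 (Or.inr rfl)]
  have hsum (e : E) : Summable fun c => ‖r (d₁ e).1 (d₁ e).2 c * r (d₂ e).1 (d₂ e).2 c‖ := by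
    simpa only [norm_mul] using lp.summable_mul (by simpa using Real.HolderConjugate.two_two) _ _
  rw [tsum_congr hregroup, (summable_norm_prod_and_tsum_prod_eq _ hsum).2]
  refine Finset.prod_congr rfl fun e _ => ?_
  rw [lp.inner_eq_tsum]
  exact tsum_congr fun c => by simp [mul_comm]

theorem IsTwoEnded.contraction_map_eq (hδ : IsTwoEnded δ) (g : ℓ²(C, ℝ) → ℓ²(C, ℝ))
    (hg : ∀ a b, ⟪g a, g b⟫_ℝ = ⟪a, b⟫_ℝ) (T : ∀ v, ℓ²(I v → C, ℝ) →L[ℝ] ℓ²(I v → C, ℝ))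
    (hT : ∀ v (r : I v → ℓ²(C, ℝ)) (x : ℓ²(I v → C, ℝ)),
      (∀ d, x d = ∏ i, r i (d i)) → ∀ d, T v x d = ∏ i, g (r i) (d i))
    (x : ∀ v, ℓ²(I v → C, ℝ)) :
    hδ.contraction (fun v => T v (x v)) = hδ.contraction x := by
  classical
  suffices hδ.contraction.compContinuousLinearMap T = hδ.contraction from congr($this x)
  refine ContinuousMultilinearMap.ext_on (fun v => dense_span_range_lp_single _) fun y hy => ?_
  choose a ha using hy
  have hsingle v d : y v d = ∏ i, (lp.single 2 (a v i) 1 : ℓ²(C, ℝ)) (d i) := by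
    rw [← ha v, lp_single_pi_apply]
  have hTy v d := hT v _ _ (hsingle v) d
  obtain ⟨d₁, d₂, htensor⟩ := hδ.exists_tsum_prod_tensor (C := C)
  simp only [ContinuousMultilinearMap.compContinuousLinearMap_apply, contraction_apply, hTy,
    hsingle, htensor, hg]

end Tensor

lemma IsEnum.isTwoEnded {V : Type} [Fintype V] [DecidableEq V] {F : SimpleGraph V}
    [DecidableRel F.Adj] {δ : ∀ v, Fin (F.degree v) → F.edgeSet} (hδ : IsEnum F δ) :
    IsTwoEnded δ := by
  rintro ⟨e, he⟩
  induction e using Sym2.ind with | h a b => ?_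
  obtain ⟨i, hi⟩ := ((hδ a).2 ⟨s(a, b), he⟩).1 (Sym2.mem_mk_left a b)
  obtain ⟨j, hj⟩ := ((hδ b).2 ⟨s(a, b), he⟩).1 (Sym2.mem_mk_right a b)
  refine ⟨⟨a, i⟩, ⟨b, j⟩, F.ne_of_adj he, fun ⟨v, k⟩ => ⟨fun hk => ?_, ?_⟩⟩
  · rcases Sym2.mem_iff.1 (((hδ v).2 _).2 ⟨k, hk⟩) with rfl | rfl
    · exact Or.inl (congrArg _ ((hδ v).1 (hk.trans hi.symm)))
    · exact Or.inr (congrArg _ ((hδ v).1 (hk.trans hj.symm)))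
  · rintro (h | h) <;> cases h
    exacts [hi, hj]

theorem stmt15_general (C : Type)
    (act : (l2 C ≃ₗᵢ[ℝ] l2 C) → ∀ k : ℕ, Hk C k ≃ₗᵢ[ℝ] Hk C k)
    (hact : IsTensorPowerAction act)
    (g : l2 C ≃ₗᵢ[ℝ] l2 C)
    (h : ∀ k : ℕ, Hk C k)
    {V : Type} [Fintype V] [DecidableEq V] (F : SimpleGraph V) [DecidableRel F.Adj]
    (δ : ∀ v : V, Fin (F.degree v) → F.edgeSet) (hδ : IsEnum F δ) :
    piF F δ (fun v => act g (F.degree v) (h (F.degree v))) =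
      piF F δ (fun v => h (F.degree v)) :=
  hδ.isTwoEnded.contraction_map_eq g g.inner_map_map
    (fun v => (act g (F.degree v)).toLinearIsometry.toContinuousLinearMap)
    (fun v => hact g (F.degree v)) fun v => h (F.degree v)

/-- The partition function is `O(H)`-invariant: for every `g ∈ O(H)`,
every `h = (h_k)_k ∈ ∏_{k∈ℕ} B_k` and every finite simple graph `F`,
`π(g·h)(F) = π(h)(F)`, where `g·h = (g·h_k)_k` via the natural tensor-power action of
`O(H)` on each `H_k`.  (Partition function values are expressed via `π_F` with an
arbitrary enumeration `δ` of the incident edges.) -/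
theorem stmt15 (C : Type)
    (act : (l2 C ≃ₗᵢ[ℝ] l2 C) → ∀ k : ℕ, Hk C k ≃ₗᵢ[ℝ] Hk C k)
    (hact : IsTensorPowerAction act)
    (g : l2 C ≃ₗᵢ[ℝ] l2 C)
    (h : ∀ k : ℕ, Hk C k) (hB : ∀ k, h k ∈ Bk C k)
    {V : Type} [Fintype V] [DecidableEq V] (F : SimpleGraph V) [DecidableRel F.Adj]
    (δ : ∀ v : V, Fin (F.degree v) → F.edgeSet) (hδ : IsEnum F δ) :
    piF F δ (fun v => act g (F.degree v) (h (F.degree v))) =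
      piF F δ (fun v => h (F.degree v)) :=
  stmt15_general C act hact g h F δ hδ
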